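/- Let 0 < α < 1. There exists a function f ∈ L^1(ℝ) ∩ L^α(ℝ) such that ψ̃_1 f ∉ L^α(ℝ), where ψ̃_1 f is the function obtained by replacing f by its mean value on each interval [k, k+1), k ∈ ℤ. Concretely, for suitable γ > 0 and δ ∈ ℝ, the function f defined by f(x) = k^δ for x ∈ [k, k + k^{-γ}], k ≥ 1, and f(x) = 0 otherwise, satisfies: f ∈ L^α iff αδ − γ < −1, and ψ̃_1 f ∈ L^α iff α(δ − γ) < −1; choosing parameters with αδ − γ < −1 ≤ α(δ − γ) and δ < γ − 1 gives f ∈ L^1 ∩ L^α with ψ̃_1 f ∉ L^α. -/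

import Mathlib

open MeasureTheory Real
open scoped ENNReal

/-- Unit-grid cell average on `ℝ`: `(ψ̃_1 f)(x)` is the mean value of `f` on the
interval `[⌊x⌋, ⌊x⌋+1)`. -/
noncomputable def psiTildeOne (f : ℝ → ℝ) (x : ℝ) : ℝ :=
  ∫ t in Set.Ico ((⌊x⌋ : ℝ)) ((⌊x⌋ : ℝ) + 1), f t

/-- If a real number lies in two length-≤1 windows `[m+1, m+2)` and `[k+1, k+2)`
with natural `m, k`, then `m = k`. -/
lemma stmt10_aux_eq (m k : ℕ) (x : ℝ) (h1 : (m : ℝ) + 1 ≤ x) (h2 : x < (m : ℝ) + 2)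
    (h3 : (k : ℝ) + 1 ≤ x) (h4 : x < (k : ℝ) + 2) : m = k := by
  have hmk : (m : ℝ) < (k : ℝ) + 1 := by linarith
  have hkm : (k : ℝ) < (m : ℝ) + 1 := by linarith
  have h5 : m < k + 1 := by exact_mod_cast hmk
  have h6 : k < m + 1 := by exact_mod_cast hkm
  omega

/-- for `0 < α < 1`, there exists `f ∈ L¹(ℝ) ∩ L^α(ℝ)` whose unit-grid
cell average `ψ̃_1 f` is not in `L^α(ℝ)`: the averaging operator does not map
`L¹ ∩ L^α` into `L^α` in the subcritical case. -/
theorem stmt10 (α : ℝ) (hα : 0 < α) (hα1 : α < 1) :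
    ∃ f : ℝ → ℝ, MemLp f 1 (volume : Measure ℝ) ∧
      MemLp f (ENNReal.ofReal α) (volume : Measure ℝ) ∧
      ¬ MemLp (psiTildeOne f) (ENNReal.ofReal α) (volume : Measure ℝ) := by
  have hαne : α ≠ 0 := hα.ne'
  -- lengths L k = (k+1)^(-1/α)
  set L : ℕ → ℝ := fun k => ((k : ℝ) + 1) ^ (-(1 / α)) with hLdef
  have hbase : ∀ k : ℕ, (0 : ℝ) < (k : ℝ) + 1 := fun k => by positivity
  have hL0 : ∀ k, 0 < L k := fun k => Real.rpow_pos_of_pos (hbase k) _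
  have hL1 : ∀ k, L k ≤ 1 := fun k =>
    Real.rpow_le_one_of_one_le_of_nonpos (by simp) (by
      have : 0 < 1 / α := by positivity
      linarith)
  -- the set S and function f
  set S : Set ℝ := ⋃ k : ℕ, Set.Ico ((k : ℝ) + 1) (((k : ℝ) + 1) + L k) with hSdef
  have hSm : MeasurableSet S := MeasurableSet.iUnion fun k => measurableSet_Ico
  set f : ℝ → ℝ := S.indicator fun _ => (1 : ℝ) with hfdef
  -- summability of L
  have hsumL : Summable L := by
    have h1α : 1 < 1 / α := one_lt_one_div hα hα1
    have h0 : Summable (fun n : ℕ => 1 / (n : ℝ) ^ (1 / α)) :=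
      Real.summable_one_div_nat_rpow.mpr h1α
    have h1 : Summable (fun n : ℕ => 1 / ((n : ℝ) + 1) ^ (1 / α)) := by
      have := (summable_nat_add_iff 1).mpr h0
      simpa using this
    refine h1.congr fun k => ?_
    show 1 / ((k : ℝ) + 1) ^ (1 / α) = ((k : ℝ) + 1) ^ (-(1 / α))
    rw [Real.rpow_neg (hbase k).le, one_div]
  -- S has finite measure
  have hvol : volume S ≠ ⊤ := by
    have hle : volume S ≤ ∑' k : ℕ, volume (Set.Ico ((k : ℝ) + 1) (((k : ℝ) + 1) + L k)) :=
      measure_iUnion_le _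
    have heq : ∀ k : ℕ, volume (Set.Ico ((k : ℝ) + 1) (((k : ℝ) + 1) + L k))
        = ENNReal.ofReal (L k) := by
      intro k; rw [Real.volume_Ico]; congr 1; ring
    have : (∑' k : ℕ, volume (Set.Ico ((k : ℝ) + 1) (((k : ℝ) + 1) + L k)))
        = ENNReal.ofReal (∑' k, L k) := by
      rw [ENNReal.ofReal_tsum_of_nonneg (fun k => (hL0 k).le) hsumL]
      exact tsum_congr heq
    exact ne_top_of_le_ne_top (by rw [this]; exact ENNReal.ofReal_ne_top) hle
  -- key pointwise computation of the average
  have hpsi : ∀ k : ℕ, ∀ x ∈ Set.Ico ((k : ℝ) + 1) ((k : ℝ) + 2), psiTildeOne f x = L k := by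
    intro k x hx
    obtain ⟨hx1, hx2⟩ := hx
    have hfl : ⌊x⌋ = (k : ℤ) + 1 := by
      rw [Int.floor_eq_iff]
      constructor <;> push_cast <;> linarith
    have hcoe : ((⌊x⌋ : ℤ) : ℝ) = (k : ℝ) + 1 := by rw [hfl]; push_cast; ring
    have hcap : S ∩ Set.Ico ((k : ℝ) + 1) (((k : ℝ) + 1) + 1)
        = Set.Ico ((k : ℝ) + 1) (((k : ℝ) + 1) + L k) := by
      ext y
      constructor
      · rintro ⟨hyS, hy1, hy2⟩
        rw [hSdef, Set.mem_iUnion] at hyS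
        obtain ⟨m, hm1, hm2⟩ := hyS
        have hmk : m = k := by
          refine stmt10_aux_eq m k y hm1 ?_ hy1 (by linarith)
          have := hL1 m; linarith
        subst hmk
        exact ⟨hm1, hm2⟩
      · rintro ⟨hy1, hy2⟩
        refine ⟨Set.mem_iUnion.mpr ⟨k, hy1, hy2⟩, hy1, ?_⟩
        have := hL1 k; linarith
    rw [psiTildeOne, hcoe, hfdef, integral_indicator_const (1 : ℝ) hSm]
    rw [measureReal_def, Measure.restrict_apply hSm, hcap, Real.volume_Ico, smul_eq_mul, mul_one]
    rw [show (k : ℝ) + 1 + L k - ((k : ℝ) + 1) = L k by ring]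
    exact ENNReal.toReal_ofReal (hL0 k).le
  refine ⟨f, ?_, ?_, ?_⟩
  · exact memLp_indicator_const 1 hSm 1 (Or.inr hvol)
  · exact memLp_indicator_const _ hSm 1 (Or.inr hvol)
  · intro hmem
    have hp0 : (ENNReal.ofReal α) ≠ 0 := (ENNReal.ofReal_pos.mpr hα).ne'
    have hpt : (ENNReal.ofReal α) ≠ ⊤ := ENNReal.ofReal_ne_top
    have htoReal : (ENNReal.ofReal α).toReal = α := ENNReal.toReal_ofReal hα.le
    have hfin := hmem.2
    rw [eLpNorm_eq_lintegral_rpow_enorm_toReal hp0 hpt, htoReal] at hfin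
    -- show the lintegral is infinite
    have hIco : ∀ k : ℕ, (∫⁻ x in Set.Ico ((k : ℝ) + 1) ((k : ℝ) + 2),
        (‖psiTildeOne f x‖₊ : ℝ≥0∞) ^ α) = ENNReal.ofReal (((k : ℝ) + 1)⁻¹) := by
      intro k
      rw [setLIntegral_congr_fun measurableSet_Ico
        (fun x hx => by rw [hpsi k x hx])]
      rw [setLIntegral_const, Real.volume_Ico,
        show (k : ℝ) + 2 - ((k : ℝ) + 1) = 1 by ring, ENNReal.ofReal_one, mul_one]
      rw [show (‖L k‖₊ : ℝ≥0∞) = ENNReal.ofReal (L k) from Real.enorm_eq_ofReal (hL0 k).le, ENNReal.ofReal_rpow_of_pos (hL0 k)]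
      congr 1
      show (((k : ℝ) + 1) ^ (-(1 / α))) ^ α = ((k : ℝ) + 1)⁻¹
      rw [← Real.rpow_mul (hbase k).le]
      have : -(1 / α) * α = -1 := by field_simp
      rw [this, Real.rpow_neg_one]
    have hdisj : Pairwise (Function.onFun Disjoint
        fun k : ℕ => Set.Ico ((k : ℝ) + 1) ((k : ℝ) + 2)) := by
      intro m k hmk
      rw [Function.onFun, Set.disjoint_left]
      rintro x ⟨h1, h2⟩ ⟨h3, h4⟩
      exact hmk (stmt10_aux_eq m k x h1 h2 h3 h4)
    have hsum : (∫⁻ x in ⋃ k : ℕ, Set.Ico ((k : ℝ) + 1) ((k : ℝ) + 2),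
        (‖psiTildeOne f x‖₊ : ℝ≥0∞) ^ α) = ∑' k : ℕ, ENNReal.ofReal (((k : ℝ) + 1)⁻¹) := by
      rw [lintegral_iUnion (fun k => measurableSet_Ico) hdisj]
      exact tsum_congr hIco
    have htop : (∑' k : ℕ, ENNReal.ofReal (((k : ℝ) + 1)⁻¹)) = ⊤ := by
      by_contra hT
      have hs := ENNReal.summable_toReal hT
      have hs' : Summable (fun k : ℕ => ((k : ℝ) + 1)⁻¹) := by
        refine hs.congr fun k => ?_
        rw [ENNReal.toReal_ofReal (by positivity)]
      have : Summable (fun n : ℕ => ((n : ℝ))⁻¹) :=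
        (summable_nat_add_iff 1).mp (by push_cast; exact hs')
      exact Real.not_summable_natCast_inv this
    have hlint : (∫⁻ x, (‖psiTildeOne f x‖₊ : ℝ≥0∞) ^ α ∂(volume : Measure ℝ)) = ⊤ := by
      refine top_unique ?_
      calc (⊤ : ℝ≥0∞) = ∑' k : ℕ, ENNReal.ofReal (((k : ℝ) + 1)⁻¹) := htop.symm
        _ = _ := hsum.symm
        _ ≤ _ := setLIntegral_le_lintegral _ _
    rw [show (∫⁻ x, ‖psiTildeOne f x‖ₑ ^ α) = ⊤ from hlint] at hfin
    rw [ENNReal.top_rpow_of_pos (by positivity)] at hfin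
    exact (lt_irrefl _ hfin).elim
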